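/- In an L²∞ algebra (V, {ᵢlₙ}), the subfamily {₁lₙ}_{n≥1} satisfies the L∞ algebra identities, and likewise the subfamily {ₙlₙ}_{n≥1} satisfies the L∞ identities; both share the same differential ₁l₁. -/
import Mathlib


/-- σ ∈ S_n is an (s, n−s)-unshuffle: it is increasing on the first s positions and
on the last n−s positions. -/
def IsUnshuffle {n : ℕ} (s : ℕ) (σ : Equiv.Perm (Fin n)) : Prop :=
  (∀ a b : Fin n, (a : ℕ) < (b : ℕ) → (b : ℕ) < s → σ a < σ b) ∧
  (∀ a b : Fin n, s ≤ (a : ℕ) → (a : ℕ) < (b : ℕ) → σ a < σ b)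

instance {n : ℕ} (s : ℕ) : DecidablePred (IsUnshuffle (n := n) s) := fun σ => by
  unfold IsUnshuffle; infer_instance

/-- The summand l_r(l_s(v_{σ(1)},...,v_{σ(s)}), v_{σ(s+1)},...,v_{σ(n)}) of the
generalized Jacobi identity, for a family of brackets indexed by arity and by an
extra index i (so `m r i` is ᵢl_r); here r = n − s + 1. -/
def L2Term {V : Type*} [AddCommGroup V] (m : (k : ℕ) → (i : ℕ) → (Fin k → V) → V)
    (n : ℕ) (s : Fin (n + 1)) (σ : Equiv.Perm (Fin n)) (i j : ℕ) (v : Fin n → V) : V :=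
  m (n - (s : ℕ) + 1) i
    (Fin.cases
      (m (s : ℕ) j (fun q : Fin (s : ℕ) =>
        v (σ ⟨q.1, by have h1 := q.2; have h2 := s.2; omega⟩)))
      (fun q : Fin (n - (s : ℕ)) =>
        v (σ ⟨(s : ℕ) + q.1, by have h1 := q.2; omega⟩)))

/-- The (ungraded) L∞ algebra identities for a family of brackets l_n. -/
def IsLInfty {V : Type*} [AddCommGroup V] (m : (k : ℕ) → (Fin k → V) → V) : Prop :=
  ∀ (n : ℕ) (v : Fin n → V),
    (∑ s : Fin (n + 1), ∑ σ : Equiv.Perm (Fin n),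
      if 1 ≤ (s : ℕ) ∧ IsUnshuffle (s : ℕ) σ then
        ((Equiv.Perm.sign σ : ℤ) * (-1) ^ ((n - (s : ℕ) + 1) * ((s : ℕ) - 1))) •
          L2Term (fun k _ => m k) n s σ 0 0 v
      else 0) = 0

/-- The L²∞ algebra identities: for all n and all 2 ≤ k ≤ n+1,
Σ_{r+s=n+1, i+j=k, (s,r−1)-unshuffles σ} sgn(σ)(−1)^{r(s−1)}
  ᵢl_r(ⱼl_s(v_{σ(1)},...,v_{σ(s)}), v_{σ(s+1)},...,v_{σ(n)}) = 0,
with 1 ≤ j ≤ s and 1 ≤ i ≤ r. -/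
def IsL2Infty {V : Type*} [AddCommGroup V]
    (l : (k : ℕ) → (i : ℕ) → (Fin k → V) → V) : Prop :=
  ∀ (n k : ℕ), 2 ≤ k → k ≤ n + 1 → ∀ v : Fin n → V,
    (∑ s : Fin (n + 1), ∑ σ : Equiv.Perm (Fin n), ∑ j : Fin (k + 1),
      if 1 ≤ (s : ℕ) ∧ IsUnshuffle (s : ℕ) σ ∧ 1 ≤ (j : ℕ) ∧ (j : ℕ) ≤ (s : ℕ)
          ∧ 1 ≤ k - (j : ℕ) ∧ k - (j : ℕ) ≤ n - (s : ℕ) + 1 then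
        ((Equiv.Perm.sign σ : ℤ) * (-1) ^ ((n - (s : ℕ) + 1) * ((s : ℕ) - 1))) •
          L2Term l n s σ (k - (j : ℕ)) (j : ℕ) v
      else 0) = 0

/-- in an L²∞ algebra (V, {ᵢlₙ}), the subfamily {₁lₙ} satisfies the L∞
identities (take k = 2, forcing i = j = 1), the subfamily {ₙlₙ} satisfies the L∞
identities (take k = n+1, forcing i = r, j = s), and both subfamilies share the same
differential ₁l₁. -/
theorem l2infty_subfamilies_are_linfty
    {K V : Type*} [Field K] [CharZero K] [AddCommGroup V] [Module K V]
    (l : (k : ℕ) → (i : ℕ) → (Fin k → V) → V)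
    (hl : IsL2Infty l) :
    IsLInfty (fun n => l n 1)
    ∧ IsLInfty (fun n => l n n)
    ∧ (fun n => l n 1) 1 = (fun n => l n n) 1 := by
  refine ⟨?_, ?_, rfl⟩
  · intro n v
    rcases Nat.eq_zero_or_pos n with hn | hn
    · subst hn
      refine Finset.sum_eq_zero fun s _ => Finset.sum_eq_zero fun σ _ => ?_
      rw [if_neg]
      rintro ⟨h1, -⟩
      have := s.2
      omega
    · have H := hl n 2 le_rfl (by omega) v
      refine Eq.trans ?_ H
      refine Finset.sum_congr rfl fun s _ => Finset.sum_congr rfl fun σ _ => ?_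
      symm
      rw [Fin.sum_univ_three]
      simp only [Fin.isValue, Fin.val_zero, Fin.val_one, Fin.val_two]
      rw [if_neg (show ¬(1 ≤ (s : ℕ) ∧ IsUnshuffle (s : ℕ) σ ∧ 1 ≤ 0 ∧ 0 ≤ (s : ℕ)
            ∧ 1 ≤ 2 - 0 ∧ 2 - 0 ≤ n - (s : ℕ) + 1) from
            fun ⟨_, _, h3, _⟩ => by omega),
          if_neg (show ¬(1 ≤ (s : ℕ) ∧ IsUnshuffle (s : ℕ) σ ∧ 1 ≤ 2 ∧ 2 ≤ (s : ℕ)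
            ∧ 1 ≤ 2 - 2 ∧ 2 - 2 ≤ n - (s : ℕ) + 1) from
            fun ⟨_, _, _, _, h5, _⟩ => by omega), zero_add, add_zero]
      by_cases h : 1 ≤ (s : ℕ) ∧ IsUnshuffle (s : ℕ) σ
      · rw [if_pos ⟨h.1, h.2, le_rfl, h.1, by omega, by omega⟩, if_pos h]
        rfl
      · rw [if_neg (fun hc => h ⟨hc.1, hc.2.1⟩), if_neg h]
  · intro n v
    rcases Nat.eq_zero_or_pos n with hn | hn
    · subst hn
      refine Finset.sum_eq_zero fun s _ => Finset.sum_eq_zero fun σ _ => ?_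
      rw [if_neg]
      rintro ⟨h1, -⟩
      have := s.2
      omega
    · have H := hl n (n + 1) (by omega) le_rfl v
      refine Eq.trans ?_ H
      refine Finset.sum_congr rfl fun s _ => Finset.sum_congr rfl fun σ _ => ?_
      have hsle : (s : ℕ) ≤ n := by omega
      have key : ∀ j : Fin (n + 1 + 1), j ∈ Finset.univ → j ≠ ⟨(s : ℕ), by omega⟩ →
          (if 1 ≤ (s : ℕ) ∧ IsUnshuffle (s : ℕ) σ ∧ 1 ≤ (j : ℕ) ∧ (j : ℕ) ≤ (s : ℕ)
              ∧ 1 ≤ (n + 1) - (j : ℕ) ∧ (n + 1) - (j : ℕ) ≤ n - (s : ℕ) + 1 then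
            ((Equiv.Perm.sign σ : ℤ) * (-1) ^ ((n - (s : ℕ) + 1) * ((s : ℕ) - 1))) •
              L2Term l n s σ ((n + 1) - (j : ℕ)) (j : ℕ) v
          else 0) = 0 := by
        intro j _ hj
        have hj' : (j : ℕ) ≠ (s : ℕ) := fun he => hj (Fin.ext he)
        rw [if_neg]
        rintro ⟨h1, h2, h3, h4, h5, h6⟩
        omega
      rw [Finset.sum_eq_single_of_mem ⟨(s : ℕ), by omega⟩ (Finset.mem_univ _) key]
      have heq : n + 1 - (((⟨(s : ℕ), by omega⟩ : Fin (n + 1 + 1)) : ℕ)) = n - (s : ℕ) + 1 := by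
        simp only [Fin.val_mk]
        omega
      rw [heq]
      by_cases h : 1 ≤ (s : ℕ) ∧ IsUnshuffle (s : ℕ) σ
      · rw [if_pos h, if_pos ⟨h.1, h.2, h.1, le_rfl, by omega, le_rfl⟩]
        rfl
      · rw [if_neg h, if_neg (fun hc => h ⟨hc.1, hc.2.1⟩)]
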